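/- arXiv:1706.09058 — 2 statements merged into one kernel-verified Lean document; each statement's English description precedes it below -/
import Mathlib

section
/- For every sequence {q_n} of positive real numbers, the inequality p_{n+1}/p_n < (q_{n+1} + 1)/q_n holds for infinitely many values of n. -/
/-!
Put `s n = q n / p n`. If `(q (n + 1) + 1) / q n ≤ p (n + 1) / p n` for all `n ≥ N`, then
`s (n + 1) + 1 / p (n + 1) ≤ s n` there, so the positive sequence `s` would bound every partial sum
of `∑ 1 / p n` from `N` on. This contradicts the divergence of the sum of prime reciprocals.
-/

/-- `p n` is the `n`-th prime number (1-indexed), as a real number. -/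
noncomputable def p (n : ℕ) : ℝ := Nat.nth Nat.Prime (n - 1)

open Filter Set

lemma p_pos (n : ℕ) : 0 < p n := by
  unfold p
  exact_mod_cast (Nat.prime_nth_prime _).pos

lemma Nat.not_summable_one_div_nth_prime :
    ¬ Summable fun k : ℕ => (1 : ℝ) / Nat.nth Nat.Prime k := by
  have hinj := Nat.nth_injective Nat.infinite_setOfPred_prime
  intro h
  refine not_summable_one_div_on_primes ((hinj.summable_iff fun n hn => ?_).mp ?_)
  · rw [Nat.range_nth_of_infinite Nat.infinite_setOfPred_prime] at hn
    exact indicator_of_notMem hn _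
  · refine h.congr fun k => ?_
    simp [Nat.prime_nth_prime k]

lemma summable_of_add_le_of_nonneg {s f : ℕ → ℝ} (hs : ∀ n, 0 ≤ s n) (hf : ∀ n, 0 ≤ f n)
    (h : ∀ n, s (n + 1) + f n ≤ s n) : Summable f := by
  have hpartial : ∀ m, ∑ k ∈ Finset.range m, f k + s m ≤ s 0 := by
    intro m
    induction m with
    | zero => simp
    | succ m ih => rw [Finset.sum_range_succ]; linarith [h m]
  exact summable_of_sum_range_le hf fun m => by linarith [hpartial m, hs m]

lemma summable_one_div_of_ratio_le {a q : ℕ → ℝ} (ha : ∀ n, 0 < a n) (hq : ∀ n, 0 < q n)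
    (h : ∀ n, (q (n + 1) + 1) / q n ≤ a (n + 1) / a n) :
    Summable fun n => 1 / a (n + 1) := by
  refine summable_of_add_le_of_nonneg (s := fun n => q n / a n)
    (fun n => (div_pos (hq n) (ha n)).le) (fun n => (one_div_pos.2 (ha _)).le) fun n => ?_
  have hn := h n
  rw [div_le_div_iff₀ (hq n) (ha n)] at hn
  rw [← add_div, div_le_div_iff₀ (ha _) (ha n)]
  linarith

theorem ratio_inequality (q : ℕ → ℝ) (hq : ∀ n, 0 < q n) :
    {n : ℕ | p (n + 1) / p n < (q (n + 1) + 1) / q n}.Infinite := by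
  rw [← Nat.frequently_atTop_iff_infinite]
  intro hfin
  obtain ⟨N, hN⟩ := eventually_atTop.1 hfin
  have htail := summable_one_div_of_ratio_le (a := fun n => p (N + 1 + n))
    (q := fun n => q (N + 1 + n)) (fun n => p_pos _) (fun n => hq _)
    fun n => not_lt.1 (hN (N + 1 + n) (by omega))
  refine Nat.not_summable_one_div_nth_prime ((summable_nat_add_iff (N + 1)).1 ?_)
  refine htail.congr fun n => ?_
  simp only [p, show N + 1 + (n + 1) - 1 = n + (N + 1) by omega]
end

section
/- The inequality (p_{n+1} - p_n)/p_n < 2/n holds for infinitely many natural numbers n, where p_n is the n-th prime. -/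
open Filter Finset

lemma summable_of_le_sub_succ {f b : ℕ → ℝ} (hf : ∀ n, 0 ≤ f n) (hb : ∀ n, 0 ≤ b n)
    (h : ∀ n, f n ≤ b n - b (n + 1)) : Summable f :=
  summable_of_sum_range_le hf fun n =>
    calc ∑ i ∈ range n, f i ≤ ∑ i ∈ range n, (b i - b (i + 1)) := sum_le_sum fun i _ => h i
      _ = b 0 - b n := sum_range_sub' b n
      _ ≤ b 0 := sub_le_self _ (hb n)

lemma inv_le_div_sub_div {x y r s : ℝ} (hx : 0 < x) (hy : 0 < y) (h : x * (s + 1) ≤ y * r) :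
    y⁻¹ ≤ r / x - s / y := by
  rw [div_sub_div _ _ hx.ne' hy.ne', inv_eq_one_div, div_le_div_iff₀ hy (by positivity)]
  nlinarith

lemma summable_inv_of_eventually_mul_add_one_le {a q : ℕ → ℝ} (ha : ∀ n, 0 < a n)
    (hq : ∀ n, 0 ≤ q n) (h : ∀ᶠ n in atTop, a n * (q (n + 1) + 1) ≤ a (n + 1) * q n) :
    Summable fun n => (a n)⁻¹ := by
  obtain ⟨N, hN⟩ := eventually_atTop.mp h
  rw [← summable_nat_add_iff (N + 1)]
  refine summable_of_le_sub_succ (b := fun n => q (n + N) / a (n + N))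
    (fun n => (inv_pos.mpr (ha _)).le) (fun n => div_nonneg (hq _) (ha _).le) fun n => ?_
  have hstep := inv_le_div_sub_div (ha (n + N)) (ha (n + N + 1)) (hN (n + N) (by omega))
  simpa only [← add_assoc, add_right_comm n 1 N] using hstep

theorem infinite_setOf_gap_div_lt {a q : ℕ → ℝ} (ha : ∀ n, 0 < a n) (hq : ∀ n, 0 < q n)
    (hdiv : ¬ Summable fun n => (a n)⁻¹) :
    {n | (a (n + 1) - a n) / a n < (q (n + 1) - q n + 1) / q n}.Infinite := by
  rw [← Nat.frequently_atTop_iff_infinite]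
  refine fun hfail => hdiv (summable_inv_of_eventually_mul_add_one_le ha (fun n => (hq n).le) ?_)
  filter_upwards [hfail] with n hn
  rw [not_lt, div_le_div_iff₀ (hq n) (ha n)] at hn
  linarith

lemma not_summable_inv_nth_prime : ¬ Summable fun n => ((Nat.nth Nat.Prime n : ℕ) : ℝ)⁻¹ := by
  have hinf := Nat.infinite_setOfPred_prime
  let e : ℕ ≃ Nat.Primes := Equiv.ofBijective
    (fun n => ⟨Nat.nth Nat.Prime n, Nat.nth_mem_of_infinite hinf n⟩)
    ⟨fun m n hmn => Nat.nth_injective hinf (congrArg Subtype.val hmn), fun ⟨r, hr⟩ =>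
      (Nat.range_nth_of_infinite hinf ▸ hr : r ∈ Set.range (Nat.nth Nat.Prime)).imp
        fun n hn => Subtype.ext hn⟩
  have hprimes := Nat.Primes.not_summable_one_div
  simp only [one_div] at hprimes
  exact fun hsum => hprimes (e.summable_iff.mp hsum)

theorem gap_over_prime_lt_two_over_n :
    {n : ℕ | (p (n + 1) - p n) / p n < 2 / (n : ℝ)}.Infinite := by
  have hgap := infinite_setOf_gap_div_lt (a := fun n => (Nat.nth Nat.Prime n : ℝ))
    (q := fun n => n + 1) (fun n => by exact_mod_cast (Nat.prime_nth_prime n).pos)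
    (fun n => by positivity) not_summable_inv_nth_prime
  refine (hgap.image Nat.succ_injective.injOn).mono ?_
  rintro _ ⟨n, hn, rfl⟩
  simp only [Set.mem_ofPred_eq, Nat.cast_succ] at hn ⊢
  simp only [p, Nat.succ_sub_one]
  convert hn using 2
  ring
end
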